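/- Let A be an m×n matrix, T an index set with |T| = k, and T_d disjoint from T with |T_d| ≤ S. Assume δ_S + δ_k + θ_{k,S}² < 1. Let c be any vector supported on T_d. Then the vector w̃ := M A_{T_d} (A_{T_d}ᵀ M A_{T_d})^{-1} c_{T_d}, where M = I - A_T(A_Tᵀ A_T)^{-1} A_Tᵀ, satisfies A_jᵀ w̃ = 0 for all j ∈ T, A_jᵀ w̃ = c_j for all j ∈ T_d, and ‖w̃‖₂ ≤ (√(1+δ_S) / (1 - δ_S - θ_{S,k}²/(1-δ_k))) ‖c‖₂. -/

import Mathlib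

open Matrix BigOperators Finset

noncomputable def cols {m n : ℕ} (A : Matrix (Fin m) (Fin n) ℝ) (T : Finset (Fin n)) :
    Matrix (Fin m) {j // j ∈ T} ℝ :=
  Matrix.of fun i j => A i j.1

noncomputable def l2 {ι : Type*} [Fintype ι] (v : ι → ℝ) : ℝ :=
  Real.sqrt (∑ i, v i ^ 2)

/-- `δ` is a valid `S`-restricted-isometry bound for `A`. -/
def RIPBound {m n : ℕ} (A : Matrix (Fin m) (Fin n) ℝ) (S : ℕ) (δ : ℝ) : Prop :=
  ∀ T : Finset (Fin n), T.card ≤ S → ∀ c : {j // j ∈ T} → ℝ,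
    (1 - δ) * (∑ j, c j ^ 2) ≤ (∑ i, ((cols A T).mulVec c i) ^ 2) ∧
    (∑ i, ((cols A T).mulVec c i) ^ 2) ≤ (1 + δ) * (∑ j, c j ^ 2)

/-- The `S`-restricted isometry constant `δ_S(A)`: the smallest valid RIP bound. -/
noncomputable def ripConst {m n : ℕ} (A : Matrix (Fin m) (Fin n) ℝ) (S : ℕ) : ℝ :=
  sInf {δ : ℝ | 0 ≤ δ ∧ RIPBound A S δ}

/-- `θ` is a valid `(S₁,S₂)`-restricted-orthogonality bound for `A`. -/
def ROCBound {m n : ℕ} (A : Matrix (Fin m) (Fin n) ℝ) (S₁ S₂ : ℕ) (θ : ℝ) : Prop :=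
  ∀ T₁ T₂ : Finset (Fin n), Disjoint T₁ T₂ → T₁.card ≤ S₁ → T₂.card ≤ S₂ →
    ∀ c₁ : {j // j ∈ T₁} → ℝ, ∀ c₂ : {j // j ∈ T₂} → ℝ,
      |∑ i, (cols A T₁).mulVec c₁ i * (cols A T₂).mulVec c₂ i| ≤ θ * l2 c₁ * l2 c₂

/-- The restricted orthogonality constant `θ_{S₁,S₂}(A)`. -/
noncomputable def rocConst {m n : ℕ} (A : Matrix (Fin m) (Fin n) ℝ) (S₁ S₂ : ℕ) : ℝ :=
  sInf {θ : ℝ | 0 ≤ θ ∧ ROCBound A S₁ S₂ θ}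

/-- `a_k(S, Š)` from Modified-CS. -/
noncomputable def aConst {m n : ℕ} (A : Matrix (Fin m) (Fin n) ℝ) (k S S' : ℕ) : ℝ :=
  (rocConst A S' S + rocConst A S' k * rocConst A S k / (1 - ripConst A k)) /
    (1 - ripConst A S - (rocConst A S k) ^ 2 / (1 - ripConst A k))

/-- `M = I - A_T (A_Tᵀ A_T)⁻¹ A_Tᵀ`, projection onto orthogonal complement of span of `A_T`. -/
noncomputable def projM {m n : ℕ} (A : Matrix (Fin m) (Fin n) ℝ) (T : Finset (Fin n)) :
    Matrix (Fin m) (Fin m) ℝ :=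
  1 - cols A T * ((cols A T)ᵀ * cols A T)⁻¹ * (cols A T)ᵀ

/-!
Write `Q = A_T`, `P = A_{T_d}`, `B = Pᵀ M P`, `θ = θ_{k,S} = θ_{S,k}` and
`D = 1 - δ_S - θ²/(1 - δ_k)`. The RIP and ROC inequalities are closed conditions on the constant, so they hold at the infimum defining
`ripConst` and `rocConst`. As `M` is a symmetric idempotent with `Qᵀ M = 0`, the vector
`w̃ = M P B⁻¹ c` satisfies `Qᵀ w̃ = 0` and `Pᵀ w̃ = B B⁻¹ c = c`.

For the norm, split `P x = M P x + Q y` orthogonally. Then `‖Q y‖² = ⟨Q y, P x⟩ ≤ θ ‖y‖ ‖x‖`,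
which with `(1 - δ_k) ‖y‖² ≤ ‖Q y‖²` gives `‖Q y‖² ≤ θ² ‖x‖² / (1 - δ_k)`, hence
`xᵀ B x = ‖M P x‖² ≥ D ‖x‖²`. So `B` is invertible, `‖B⁻¹ c‖ ≤ ‖c‖ / D`, and
`‖w̃‖² = ‖M P B⁻¹ c‖² ≤ ‖P B⁻¹ c‖² ≤ (1 + δ_S) ‖B⁻¹ c‖²`.
-/

section SumSq

variable {ι : Type*} [Fintype ι]

lemma sum_sq_eq_dotProduct_self (v : ι → ℝ) : ∑ i, v i ^ 2 = v ⬝ᵥ v := by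
  simp only [dotProduct, sq]

lemma l2_nonneg (v : ι → ℝ) : 0 ≤ l2 v := Real.sqrt_nonneg _

lemma l2_sq (v : ι → ℝ) : l2 v ^ 2 = ∑ i, v i ^ 2 := Real.sq_sqrt (by positivity)

lemma abs_dotProduct_le_l2_mul_l2 (u v : ι → ℝ) : |u ⬝ᵥ v| ≤ l2 u * l2 v :=
  (Real.abs_le_sqrt (sum_mul_sq_le_sq_mul_sq univ u v)).trans_eq (Real.sqrt_mul (by positivity) _)

lemma l2_subtype_of_support_subset {c : ι → ℝ} {T : Finset ι} (hc : Function.support c ⊆ T) :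
    l2 (fun j : {j // j ∈ T} => c j) = l2 c := by
  unfold l2
  rw [sum_coe_sort T (fun j => c j ^ 2)]
  congr 1
  refine sum_subset (subset_univ T) fun j _ hj => ?_
  rw [Function.notMem_support.1 fun h => hj (hc h), sq, mul_zero]

end SumSq

lemma le_sInf_mul {s : Set ℝ} (hs : s.Nonempty) {a b : ℝ} (hb : 0 ≤ b)
    (h : ∀ δ ∈ s, a ≤ δ * b) : a ≤ sInf s * b := by
  rcases hb.eq_or_lt with rfl | hb
  · obtain ⟨δ, hδ⟩ := hs
    simpa using h δ hδ
  · rw [← div_le_iff₀ hb]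
    exact le_csInf hs fun δ hδ => (div_le_iff₀ hb).2 (h δ hδ)

lemma le_sq_div_mul_sq_of_mul_sq_le_of_le_mul {a θ q Y X : ℝ} (ha : 0 < a) (hY : a * Y ^ 2 ≤ q)
    (hq : q ≤ θ * Y * X) : q ≤ θ ^ 2 / a * X ^ 2 := by
  rw [div_mul_eq_mul_div, le_div_iff₀ ha]
  -- `a q ≤ (a Y) (θ X) ≤ ((a Y)² + (θ X)²) / 2 ≤ (a q + θ² X²) / 2`
  nlinarith [sq_nonneg (a * Y - θ * X)]

section Constants

variable {m n : ℕ} (A : Matrix (Fin m) (Fin n) ℝ)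

lemma transpose_cols_mulVec_apply (T : Finset (Fin n)) (v : Fin m → ℝ) (j : {j // j ∈ T}) :
    ((cols A T)ᵀ *ᵥ v) j = ∑ i, A i j * v i := by
  simp [mulVec, dotProduct, cols]

lemma sum_sq_cols_mulVec_le (T : Finset (Fin n)) (c : {j // j ∈ T} → ℝ) :
    ∑ i, (cols A T *ᵥ c) i ^ 2 ≤ (∑ i, ∑ j, A i j ^ 2) * ∑ j, c j ^ 2 := by
  rw [sum_mul]
  gcongr with i
  calc (cols A T *ᵥ c) i ^ 2 ≤ (∑ j : {j // j ∈ T}, A i j ^ 2) * ∑ j, c j ^ 2 :=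
        sum_mul_sq_le_sq_mul_sq _ _ _
    _ ≤ (∑ j, A i j ^ 2) * ∑ j, c j ^ 2 := by
        gcongr
        rw [sum_coe_sort T (fun j => A i j ^ 2)]
        exact sum_le_sum_of_subset_of_nonneg (subset_univ T) fun _ _ _ => sq_nonneg _

lemma l2_cols_mulVec_le (T : Finset (Fin n)) (c : {j // j ∈ T} → ℝ) :
    l2 (cols A T *ᵥ c) ≤ √(∑ i, ∑ j, A i j ^ 2) * l2 c := by
  rw [l2, l2, ← Real.sqrt_mul (by positivity)]
  exact Real.sqrt_le_sqrt (sum_sq_cols_mulVec_le A T c)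

lemma ripConst_nonneg (S : ℕ) : 0 ≤ ripConst A S := Real.sInf_nonneg fun _ h => h.1

lemma ripBound_ripConst (S : ℕ) : RIPBound A S (ripConst A S) := by
  have hne : {δ : ℝ | 0 ≤ δ ∧ RIPBound A S δ}.Nonempty := by
    refine ⟨1 + ∑ i, ∑ j, A i j ^ 2, by positivity, fun T _ c => ?_⟩
    have hAc := sum_sq_cols_mulVec_le A T c
    have hc : 0 ≤ ∑ j, c j ^ 2 := by positivity
    have hF : 0 ≤ (∑ i, ∑ j, A i j ^ 2) * ∑ j, c j ^ 2 := by positivity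
    have hR : 0 ≤ ∑ i, (cols A T *ᵥ c) i ^ 2 := by positivity
    constructor <;> linarith
  intro T hT c
  have hc : 0 ≤ ∑ j, c j ^ 2 := by positivity
  have lower := le_sInf_mul hne hc (a := ∑ j, c j ^ 2 - ∑ i, (cols A T *ᵥ c) i ^ 2)
    fun δ hδ => by linarith [(hδ.2 T hT c).1]
  have upper := le_sInf_mul hne hc (a := ∑ i, (cols A T *ᵥ c) i ^ 2 - ∑ j, c j ^ 2)
    fun δ hδ => by linarith [(hδ.2 T hT c).2]
  unfold ripConst
  constructor <;> linarith

lemma rocBound_rocConst (S₁ S₂ : ℕ) : ROCBound A S₁ S₂ (rocConst A S₁ S₂) := by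
  set F := ∑ i, ∑ j, A i j ^ 2
  have hne : {θ : ℝ | 0 ≤ θ ∧ ROCBound A S₁ S₂ θ}.Nonempty := by
    refine ⟨F, by positivity, fun T₁ T₂ _ _ _ c₁ c₂ => ?_⟩
    calc |cols A T₁ *ᵥ c₁ ⬝ᵥ cols A T₂ *ᵥ c₂|
        ≤ l2 (cols A T₁ *ᵥ c₁) * l2 (cols A T₂ *ᵥ c₂) := abs_dotProduct_le_l2_mul_l2 _ _
      _ ≤ (√F * l2 c₁) * (√F * l2 c₂) :=
        mul_le_mul (l2_cols_mulVec_le A T₁ c₁) (l2_cols_mulVec_le A T₂ c₂) (l2_nonneg _)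
          (mul_nonneg (Real.sqrt_nonneg _) (l2_nonneg c₁))
      _ = (√F * √F) * l2 c₁ * l2 c₂ := by ring
      _ = F * l2 c₁ * l2 c₂ := by rw [Real.mul_self_sqrt (by positivity)]
  intro T₁ T₂ hT h₁ h₂ c₁ c₂
  rw [mul_assoc]
  exact le_sInf_mul hne (mul_nonneg (l2_nonneg _) (l2_nonneg _)) fun θ hθ => by
    rw [← mul_assoc]
    exact hθ.2 T₁ T₂ hT h₁ h₂ c₁ c₂

lemma rocConst_comm (S₁ S₂ : ℕ) : rocConst A S₁ S₂ = rocConst A S₂ S₁ := by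
  have swap : ∀ S₁ S₂ θ, ROCBound A S₁ S₂ θ → ROCBound A S₂ S₁ θ :=
    fun S₁ S₂ θ h T₁ T₂ hT h₁ h₂ c₁ c₂ => by
      have := h T₂ T₁ hT.symm h₂ h₁ c₂ c₁
      rw [show θ * l2 c₁ * l2 c₂ = θ * l2 c₂ * l2 c₁ by ring]
      simpa only [mul_comm] using this
  unfold rocConst
  congr 1
  ext θ
  exact ⟨fun h => ⟨h.1, swap _ _ _ h.2⟩, fun h => ⟨h.1, swap _ _ _ h.2⟩⟩

end Constants

section Coercive

variable {τ : Type*} [Fintype τ] {B : Matrix τ τ ℝ} {D : ℝ}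

lemma isUnit_det_of_coercive [DecidableEq τ] (hD : 0 < D)
    (hB : ∀ x, D * ∑ j, x j ^ 2 ≤ x ⬝ᵥ B *ᵥ x) : IsUnit B.det := by
  rw [isUnit_iff_ne_zero, Ne, ← exists_mulVec_eq_zero_iff]
  rintro ⟨x, hx, hBx⟩
  have hx0 : ∑ j, x j ^ 2 = 0 := by
    have := hB x
    rw [hBx, dotProduct_zero] at this
    nlinarith [sum_nonneg fun j (_ : j ∈ univ) => sq_nonneg (x j)]
  rw [sum_sq_eq_dotProduct_self] at hx0
  exact hx (dotProduct_self_eq_zero.1 hx0)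

lemma l2_le_l2_mulVec_div_of_coercive (hD : 0 < D)
    (hB : ∀ x, D * ∑ j, x j ^ 2 ≤ x ⬝ᵥ B *ᵥ x) (x : τ → ℝ) : l2 x ≤ l2 (B *ᵥ x) / D := by
  rw [le_div_iff₀ hD]
  rcases (l2_nonneg x).eq_or_lt with h | h
  · rw [← h, zero_mul]
    exact l2_nonneg _
  · have : D * l2 x ^ 2 ≤ l2 x * l2 (B *ᵥ x) := by
      rw [l2_sq]
      exact (hB x).trans ((le_abs_self _).trans (abs_dotProduct_le_l2_mul_l2 _ _))
    nlinarith

end Coercive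

section OrthCompProj

variable {ι κ τ : Type*} [Fintype ι] [Fintype κ] [Fintype τ] [DecidableEq κ]

lemma isUnit_det_transpose_mul_self {Q : Matrix ι κ ℝ} {a : ℝ} (ha : 0 < a)
    (hQ : ∀ y, a * ∑ j, y j ^ 2 ≤ ∑ i, (Q *ᵥ y) i ^ 2) : IsUnit (Qᵀ * Q).det :=
  isUnit_det_of_coercive ha fun y => by
    rw [← mulVec_mulVec, dotProduct_transpose_mulVec, ← sum_sq_eq_dotProduct_self]
    exact hQ y

variable [DecidableEq ι]

noncomputable def orthCompProj (Q : Matrix ι κ ℝ) : Matrix ι ι ℝ := 1 - Q * (Qᵀ * Q)⁻¹ * Qᵀ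

variable {Q : Matrix ι κ ℝ}

lemma orthCompProj_mulVec_add (u : ι → ℝ) :
    orthCompProj Q *ᵥ u + Q *ᵥ ((Qᵀ * Q)⁻¹ *ᵥ (Qᵀ *ᵥ u)) = u := by
  simp [orthCompProj, sub_mulVec, mulVec_mulVec, Matrix.mul_assoc]

lemma orthCompProj_transpose : (orthCompProj Q)ᵀ = orthCompProj Q := by
  simp [orthCompProj, transpose_nonsing_inv, Matrix.mul_assoc]

lemma transpose_mul_orthCompProj (hQ : IsUnit (Qᵀ * Q).det) : Qᵀ * orthCompProj Q = 0 := by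
  rw [orthCompProj, Matrix.mul_sub, Matrix.mul_one, ← Matrix.mul_assoc, ← Matrix.mul_assoc,
    mul_nonsing_inv _ hQ, Matrix.one_mul, sub_self]

lemma orthCompProj_mul_self (hQ : IsUnit (Qᵀ * Q).det) :
    orthCompProj Q * orthCompProj Q = orthCompProj Q := by
  nth_rw 1 [orthCompProj]
  rw [Matrix.sub_mul, Matrix.one_mul, Matrix.mul_assoc (Q * _), transpose_mul_orthCompProj hQ,
    Matrix.mul_zero, sub_zero]

lemma mulVec_dotProduct_orthCompProj_mulVec (hQ : IsUnit (Qᵀ * Q).det) (y : κ → ℝ)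
    (u : ι → ℝ) :
    Q *ᵥ y ⬝ᵥ orthCompProj Q *ᵥ u = 0 := by
  rw [dotProduct_comm, ← dotProduct_transpose_mulVec, mulVec_mulVec,
    transpose_mul_orthCompProj hQ, zero_mulVec, dotProduct_zero]

lemma sum_sq_orthCompProj_mulVec_add (hQ : IsUnit (Qᵀ * Q).det) (u : ι → ℝ) :
    ∑ i, (orthCompProj Q *ᵥ u) i ^ 2 + ∑ i, (Q *ᵥ ((Qᵀ * Q)⁻¹ *ᵥ (Qᵀ *ᵥ u))) i ^ 2 =
      ∑ i, u i ^ 2 := by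
  have horth := mulVec_dotProduct_orthCompProj_mulVec hQ ((Qᵀ * Q)⁻¹ *ᵥ (Qᵀ *ᵥ u)) u
  have hu := congrArg (fun v => v ⬝ᵥ v) (orthCompProj_mulVec_add (Q := Q) u)
  simp only [add_dotProduct, dotProduct_add, horth, dotProduct_comm _ (Q *ᵥ _)] at hu
  simp only [sum_sq_eq_dotProduct_self, ← hu]
  ring

lemma sum_sq_orthCompProj_mulVec_le (hQ : IsUnit (Qᵀ * Q).det) (u : ι → ℝ) :
    ∑ i, (orthCompProj Q *ᵥ u) i ^ 2 ≤ ∑ i, u i ^ 2 := by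
  rw [← sum_sq_orthCompProj_mulVec_add hQ u]
  exact le_add_of_nonneg_right (by positivity)

lemma sum_sq_mulVec_proj_eq_dotProduct (hQ : IsUnit (Qᵀ * Q).det) (u : ι → ℝ) :
    ∑ i, (Q *ᵥ ((Qᵀ * Q)⁻¹ *ᵥ (Qᵀ *ᵥ u))) i ^ 2 = Q *ᵥ ((Qᵀ * Q)⁻¹ *ᵥ (Qᵀ *ᵥ u)) ⬝ᵥ u := by
  have hu := congrArg (Q *ᵥ ((Qᵀ * Q)⁻¹ *ᵥ (Qᵀ *ᵥ u)) ⬝ᵥ ·) (orthCompProj_mulVec_add (Q := Q) u)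
  simp only [dotProduct_add, mulVec_dotProduct_orthCompProj_mulVec hQ, zero_add] at hu
  rw [sum_sq_eq_dotProduct_self, hu]

lemma dotProduct_transpose_mul_orthCompProj_mul_mulVec (hQ : IsUnit (Qᵀ * Q).det)
    (P : Matrix ι τ ℝ) (x : τ → ℝ) :
    x ⬝ᵥ (Pᵀ * orthCompProj Q * P) *ᵥ x = ∑ i, (orthCompProj Q *ᵥ (P *ᵥ x)) i ^ 2 := by
  rw [sum_sq_eq_dotProduct_self, ← mulVec_mulVec, ← mulVec_mulVec, dotProduct_transpose_mulVec,
    ← dotProduct_transpose_mulVec _ (P *ᵥ x), mulVec_mulVec (P *ᵥ x) _ (orthCompProj Q),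
    orthCompProj_transpose, orthCompProj_mul_self hQ, dotProduct_comm]

variable {P : Matrix ι τ ℝ} {δk δS θ : ℝ}

theorem le_sum_sq_orthCompProj_mulVec (hδk : δk < 1)
    (hQ : ∀ y, (1 - δk) * ∑ j, y j ^ 2 ≤ ∑ i, (Q *ᵥ y) i ^ 2)
    (hP : ∀ x, (1 - δS) * ∑ j, x j ^ 2 ≤ ∑ i, (P *ᵥ x) i ^ 2)
    (hQP : ∀ y x, |Q *ᵥ y ⬝ᵥ P *ᵥ x| ≤ θ * l2 y * l2 x) (x : τ → ℝ) :
    (1 - δS - θ ^ 2 / (1 - δk)) * ∑ j, x j ^ 2 ≤ ∑ i, (orthCompProj Q *ᵥ (P *ᵥ x)) i ^ 2 := by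
  have hG := isUnit_det_transpose_mul_self (sub_pos.2 hδk) hQ
  set y := (Qᵀ * Q)⁻¹ *ᵥ (Qᵀ *ᵥ (P *ᵥ x))
  have hsplit := sum_sq_orthCompProj_mulVec_add hG (P *ᵥ x)
  have hQy : ∑ i, (Q *ᵥ y) i ^ 2 ≤ θ ^ 2 / (1 - δk) * ∑ j, x j ^ 2 := by
    rw [← l2_sq x]
    refine le_sq_div_mul_sq_of_mul_sq_le_of_le_mul (sub_pos.2 hδk) ((l2_sq y).symm ▸ hQ y) ?_
    rw [sum_sq_mulVec_proj_eq_dotProduct hG]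
    exact (le_abs_self _).trans (hQP y x)
  linarith [hP x]

theorem orthCompProj_solution [DecidableEq τ] (hδk : δk < 1)
    (hQ : ∀ y, (1 - δk) * ∑ j, y j ^ 2 ≤ ∑ i, (Q *ᵥ y) i ^ 2)
    (hP : ∀ x, (1 - δS) * ∑ j, x j ^ 2 ≤ ∑ i, (P *ᵥ x) i ^ 2 ∧
      ∑ i, (P *ᵥ x) i ^ 2 ≤ (1 + δS) * ∑ j, x j ^ 2)
    (hQP : ∀ y x, |Q *ᵥ y ⬝ᵥ P *ᵥ x| ≤ θ * l2 y * l2 x)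
    (hD : 0 < 1 - δS - θ ^ 2 / (1 - δk)) (c : τ → ℝ) :
    let w := (orthCompProj Q * P) *ᵥ ((Pᵀ * orthCompProj Q * P)⁻¹ *ᵥ c)
    Qᵀ *ᵥ w = 0 ∧ Pᵀ *ᵥ w = c ∧ l2 w ≤ √(1 + δS) / (1 - δS - θ ^ 2 / (1 - δk)) * l2 c := by
  intro w
  have hG := isUnit_det_transpose_mul_self (sub_pos.2 hδk) hQ
  have hB : ∀ x, (1 - δS - θ ^ 2 / (1 - δk)) * ∑ j, x j ^ 2 ≤
      x ⬝ᵥ (Pᵀ * orthCompProj Q * P) *ᵥ x := fun x => by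
    rw [dotProduct_transpose_mul_orthCompProj_mul_mulVec hG]
    exact le_sum_sq_orthCompProj_mulVec hδk hQ (fun x => (hP x).1) hQP x
  set x₀ := (Pᵀ * orthCompProj Q * P)⁻¹ *ᵥ c
  have hx₀ : (Pᵀ * orthCompProj Q * P) *ᵥ x₀ = c := by
    rw [mulVec_mulVec, mul_nonsing_inv _ (isUnit_det_of_coercive hD hB), one_mulVec]
  refine ⟨?_, ?_, ?_⟩
  · rw [mulVec_mulVec, ← Matrix.mul_assoc, transpose_mul_orthCompProj hG, Matrix.zero_mul,
      zero_mulVec]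
  · rw [mulVec_mulVec, ← Matrix.mul_assoc, hx₀]
  · have hw : ∑ i, w i ^ 2 ≤ (1 + δS) * ∑ j, x₀ j ^ 2 := by
      rw [show w = orthCompProj Q *ᵥ (P *ᵥ x₀) from (mulVec_mulVec _ _ _).symm]
      exact (sum_sq_orthCompProj_mulVec_le hG _).trans (hP x₀).2
    calc l2 w ≤ √(1 + δS) * l2 x₀ := by
          rw [l2, l2, ← Real.sqrt_mul' _ (by positivity)]
          exact Real.sqrt_le_sqrt hw
      _ ≤ √(1 + δS) * (l2 c / (1 - δS - θ ^ 2 / (1 - δk))) := by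
          gcongr
          simpa only [hx₀] using l2_le_l2_mulVec_div_of_coercive hD hB x₀
      _ = _ := by ring

end OrthCompProj

theorem stmt7 {m n k S : ℕ} (A : Matrix (Fin m) (Fin n) ℝ)
    (T Td : Finset (Fin n)) (hT : T.card = k) (hTd : Td.card ≤ S)
    (hd : Disjoint T Td)
    (hcond : ripConst A S + ripConst A k + rocConst A k S ^ 2 < 1)
    (c : Fin n → ℝ) (hc : Function.support c ⊆ ↑Td) :
    let w := (projM A T * cols A Td).mulVec
      ((((cols A Td)ᵀ * projM A T * cols A Td)⁻¹).mulVec fun j : {j // j ∈ Td} => c j.1)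
    (∀ j ∈ T, (∑ i, A i j * w i) = 0) ∧
    (∀ j ∈ Td, (∑ i, A i j * w i) = c j) ∧
    l2 w ≤ (Real.sqrt (1 + ripConst A S) /
      (1 - ripConst A S - rocConst A S k ^ 2 / (1 - ripConst A k))) * l2 c := by
  intro w
  have hδk : ripConst A k < 1 := by
    linarith [ripConst_nonneg A S, sq_nonneg (rocConst A k S)]
  have hD : 0 < 1 - ripConst A S - rocConst A k S ^ 2 / (1 - ripConst A k) := by
    rw [sub_pos, div_lt_iff₀ (sub_pos.2 hδk)]
    nlinarith [mul_nonneg (ripConst_nonneg A S) (ripConst_nonneg A k)]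
  -- `projM A T` is `orthCompProj (cols A T)` by definition.
  obtain ⟨hTw, hTdw, hw⟩ := orthCompProj_solution (Q := cols A T) (P := cols A Td) hδk
    (fun y => (ripBound_ripConst A k T hT.le y).1) (fun x => ripBound_ripConst A S Td hTd x)
    (fun y x => rocBound_rocConst A k S T Td hd hT.le hTd y x) hD fun j => c j.1
  refine ⟨fun j hj => ?_, fun j hj => ?_, ?_⟩
  · rw [← transpose_cols_mulVec_apply A T w ⟨j, hj⟩]
    exact congrFun hTw ⟨j, hj⟩
  · rw [← transpose_cols_mulVec_apply A Td w ⟨j, hj⟩]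
    exact congrFun hTdw ⟨j, hj⟩
  · rwa [rocConst_comm, ← l2_subtype_of_support_subset hc]
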